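/- arXiv:1309.7528 — 2 statements merged into one kernel-verified Lean document; each statement's English description precedes it below -/
import Mathlib

section
/- The function g(θ) := θ·H↓_{1+θ}(X|Y) = −log Σ_{x,y} P_XY(x,y)^{1+θ} P_Y(y)^{−θ}, extended by g(0)=0, is concave on (−1,∞), and it is strictly concave on (−1,∞) if and only if V(X|Y) > 0. -/
/-!
Put `w(x,y) := log (P(x,y) / P_Y(y))`. On the support of `P`, `P^{1+θ} P_Y^{-θ} = P e^{θ w}`, so
`θ H↓_{1+θ}(X|Y) = -Λ(θ)` where `Λ(θ) = log ∑ P e^{θ w}` is the cumulant generating function of `w`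
under `P`. With the tilted weights `a = P e^{θ w}`, `Λ'' = ((∑ a)(∑ a w²) - (∑ a w)²) / (∑ a)²`, and
`(∑ a)(∑ a w²) - (∑ a w)² = ½ ∑ᵢ ∑ⱼ aᵢ aⱼ (wᵢ - wⱼ)²` is `≥ 0`, and `> 0` exactly when `w` takes two
values on the support of `P`; at `θ = 0` it is `V(X|Y)`. If `w` is constant on the support, `Λ` is
affine, hence not strictly convex.
-/

open Real Filter

/-- Marginal distribution on `𝒴`. -/
noncomputable def margY {𝒳 𝒴 : Type*} [Fintype 𝒳] (P : 𝒳 × 𝒴 → ℝ) (y : 𝒴) : ℝ :=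
  ∑ x : 𝒳, P (x, y)

/-- `θ · H↓_{1+θ}(X|Y) = - log Σ P(x,y)^{1+θ} P_Y(y)^{-θ}` (which equals `0` at `θ = 0`). -/
noncomputable def thetaCondRenyiDown {𝒳 𝒴 : Type*} [Fintype 𝒳] [Fintype 𝒴]
    (P : 𝒳 × 𝒴 → ℝ) (θ : ℝ) : ℝ :=
  -Real.log (∑ x : 𝒳, ∑ y : 𝒴,
    if 0 < P (x, y) then P (x, y) ^ (1 + θ) * margY P y ^ (-θ) else 0)

/-- Conditional entropy `H(X|Y)`. -/
noncomputable def condEnt {𝒳 𝒴 : Type*} [Fintype 𝒳] [Fintype 𝒴]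
    (P : 𝒳 × 𝒴 → ℝ) : ℝ :=
  -∑ x : 𝒳, ∑ y : 𝒴,
    if 0 < P (x, y) then P (x, y) * Real.log (P (x, y) / margY P y) else 0

/-- Conditional varentropy `V(X|Y)`. -/
noncomputable def condVarEnt {𝒳 𝒴 : Type*} [Fintype 𝒳] [Fintype 𝒴]
    (P : 𝒳 × 𝒴 → ℝ) : ℝ :=
  (∑ x : 𝒳, ∑ y : 𝒴,
    if 0 < P (x, y) then P (x, y) * (Real.log (P (x, y) / margY P y)) ^ 2 else 0)
  - (condEnt P) ^ 2

open Finset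

section WeightedVariance

variable {ι : Type*} [Fintype ι] (p w : ι → ℝ)

theorem sum_mul_sum_mul_sq_sub_sq_eq :
    (∑ i, p i) * (∑ i, p i * w i ^ 2) - (∑ i, p i * w i) ^ 2
      = (∑ i, ∑ j, p i * p j * (w i - w j) ^ 2) / 2 := by
  have expand : ∀ i j, p i * p j * (w i - w j) ^ 2
      = p i * (p j * w j ^ 2) + p i * w i ^ 2 * p j - 2 * (p i * w i) * (p j * w j) :=
    fun _ _ => by ring
  simp only [expand, sum_add_distrib, sum_sub_distrib, ← mul_sum, ← sum_mul]
  ring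

variable {p}

theorem sum_mul_sum_mul_sq_sub_sq_nonneg (hp : 0 ≤ p) :
    0 ≤ (∑ i, p i) * (∑ i, p i * w i ^ 2) - (∑ i, p i * w i) ^ 2 := by
  rw [sum_mul_sum_mul_sq_sub_sq_eq]
  exact div_nonneg (sum_nonneg fun i _ => sum_nonneg fun j _ =>
    mul_nonneg (mul_nonneg (hp i) (hp j)) (sq_nonneg _)) zero_le_two

theorem sum_mul_sum_mul_sq_sub_sq_pos_iff (hp : 0 ≤ p) :
    0 < (∑ i, p i) * (∑ i, p i * w i ^ 2) - (∑ i, p i * w i) ^ 2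
      ↔ ∃ i j, 0 < p i ∧ 0 < p j ∧ w i ≠ w j := by
  have term_nonneg : ∀ i j, 0 ≤ p i * p j * (w i - w j) ^ 2 := fun i j =>
    mul_nonneg (mul_nonneg (hp i) (hp j)) (sq_nonneg _)
  have term_pos_iff : ∀ i j,
      0 < p i * p j * (w i - w j) ^ 2 ↔ 0 < p i ∧ 0 < p j ∧ w i ≠ w j := by
    intro i j
    constructor
    · intro h
      have hne : p i ≠ 0 ∧ p j ≠ 0 ∧ w i ≠ w j := by simpa [sub_eq_zero, and_assoc] using h.ne'
      exact ⟨(hp i).lt_of_ne' hne.1, (hp j).lt_of_ne' hne.2.1, hne.2.2⟩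
    · rintro ⟨hi, hj, hw⟩
      exact mul_pos (mul_pos hi hj) (sq_pos_iff.2 (sub_ne_zero.2 hw))
  rw [sum_mul_sum_mul_sq_sub_sq_eq, div_pos_iff_of_pos_right two_pos,
    sum_pos_iff_of_nonneg fun i _ => sum_nonneg fun j _ => term_nonneg i j]
  simp only [mem_univ, true_and, sum_pos_iff_of_nonneg fun j _ => term_nonneg _ j, term_pos_iff]

end WeightedVariance

section WeightedCgf

variable {ι : Type*} (p w : ι → ℝ)

noncomputable def tilted (θ : ℝ) (i : ι) : ℝ := p i * exp (θ * w i)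

theorem hasDerivAt_tilted (θ : ℝ) (i : ι) :
    HasDerivAt (fun t => tilted p w t i) (tilted p w θ i * w i) θ := by
  have := (((hasDerivAt_id θ).mul_const (w i)).exp).const_mul (p i)
  simpa [tilted, mul_comm, mul_left_comm, mul_assoc] using this

variable {p}

theorem tilted_pos_iff {θ : ℝ} {i : ι} : 0 < tilted p w θ i ↔ 0 < p i :=
  mul_pos_iff_of_pos_right (exp_pos _)

theorem tilted_nonneg (hp : 0 ≤ p) (θ : ℝ) : 0 ≤ tilted p w θ :=
  fun i => mul_nonneg (hp i) (exp_pos _).le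

variable [Fintype ι]

variable (p) in
noncomputable def weightedCgf (θ : ℝ) : ℝ := log (∑ i, tilted p w θ i)

variable (p) in
theorem hasDerivAt_sum_tilted (θ : ℝ) :
    HasDerivAt (fun t => ∑ i, tilted p w t i) (∑ i, tilted p w θ i * w i) θ :=
  HasDerivAt.fun_sum fun i _ => hasDerivAt_tilted p w θ i

theorem sum_tilted_pos (hp : 0 ≤ p) (hp' : ∃ i, 0 < p i) (θ : ℝ) :
    0 < ∑ i, tilted p w θ i := by
  obtain ⟨i, hi⟩ := hp'
  exact sum_pos' (fun j _ => tilted_nonneg w hp θ j) ⟨i, mem_univ i, (tilted_pos_iff w).2 hi⟩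

theorem hasDerivAt_weightedCgf (hp : 0 ≤ p) (hp' : ∃ i, 0 < p i) (θ : ℝ) :
    HasDerivAt (weightedCgf p w) ((∑ i, tilted p w θ i * w i) / ∑ i, tilted p w θ i) θ :=
  (hasDerivAt_sum_tilted p w θ).log (sum_tilted_pos w hp hp' θ).ne'

theorem hasDerivAt_deriv_weightedCgf (hp : 0 ≤ p) (hp' : ∃ i, 0 < p i) (θ : ℝ) :
    HasDerivAt (deriv (weightedCgf p w))
      (((∑ i, tilted p w θ i) * (∑ i, tilted p w θ i * w i ^ 2)
        - (∑ i, tilted p w θ i * w i) ^ 2) / (∑ i, tilted p w θ i) ^ 2) θ := by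
  have hderiv : deriv (weightedCgf p w)
      = fun t => (∑ i, tilted p w t i * w i) / ∑ i, tilted p w t i :=
    funext fun t => (hasDerivAt_weightedCgf w hp hp' t).deriv
  have hnum : HasDerivAt (fun t => ∑ i, tilted p w t i * w i) (∑ i, tilted p w θ i * w i * w i) θ :=
    HasDerivAt.fun_sum fun i _ => (hasDerivAt_tilted p w θ i).mul_const (w i)
  have hmean := hnum.fun_div (hasDerivAt_sum_tilted p w θ) (sum_tilted_pos w hp hp' θ).ne'
  rw [hderiv]
  refine hmean.congr_deriv ?_
  simp only [sq, mul_assoc]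
  ring

theorem deriv2_weightedCgf (hp : 0 ≤ p) (hp' : ∃ i, 0 < p i) (θ : ℝ) :
    deriv^[2] (weightedCgf p w) θ
      = ((∑ i, tilted p w θ i) * (∑ i, tilted p w θ i * w i ^ 2)
        - (∑ i, tilted p w θ i * w i) ^ 2) / (∑ i, tilted p w θ i) ^ 2 :=
  (hasDerivAt_deriv_weightedCgf w hp hp' θ).deriv

theorem convexOn_weightedCgf (hp : 0 ≤ p) (hp' : ∃ i, 0 < p i) :
    ConvexOn ℝ Set.univ (weightedCgf p w) := by
  refine convexOn_univ_of_deriv2_nonneg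
    (fun θ => (hasDerivAt_weightedCgf w hp hp' θ).differentiableAt)
    (fun θ => (hasDerivAt_deriv_weightedCgf w hp hp' θ).differentiableAt) fun θ => ?_
  rw [deriv2_weightedCgf w hp hp']
  exact div_nonneg (sum_mul_sum_mul_sq_sub_sq_nonneg w (tilted_nonneg w hp θ)) (sq_nonneg _)

theorem weightedCgf_eq_of_forall_eq {c : ℝ} (hp : 0 ≤ p) (hp' : ∃ i, 0 < p i)
    (hw : ∀ i, 0 < p i → w i = c) (θ : ℝ) :
    weightedCgf p w θ = log (∑ i, p i) + θ * c := by
  have hsum : ∑ i, tilted p w θ i = (∑ i, p i) * exp (θ * c) := by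
    rw [sum_mul]
    refine sum_congr rfl fun i _ => ?_
    rcases (hp i).eq_or_lt with hpi | hpi
    · simp [tilted, ← hpi]
    · rw [tilted, hw i hpi]
  have hpos : 0 < ∑ i, p i := by
    obtain ⟨i, hi⟩ := hp'
    exact sum_pos' (fun j _ => hp j) ⟨i, mem_univ i, hi⟩
  rw [weightedCgf, hsum, log_mul hpos.ne' (exp_pos _).ne', log_exp]

theorem strictConvexOn_weightedCgf_iff {s : Set ℝ} (hs : Convex ℝ s) (hs' : s.Nontrivial)
    (hp : 0 ≤ p) (hp' : ∃ i, 0 < p i) :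
    StrictConvexOn ℝ s (weightedCgf p w) ↔ ∃ i j, 0 < p i ∧ 0 < p j ∧ w i ≠ w j := by
  constructor
  · intro hstrict
    by_contra! hconst
    obtain ⟨i₀, hi₀⟩ := hp'
    have haffine := weightedCgf_eq_of_forall_eq w hp ⟨i₀, hi₀⟩ fun i hi => hconst i i₀ hi hi₀
    obtain ⟨x, hx, y, hy, hxy⟩ := hs'
    have := hstrict.2 hx hy hxy (half_pos one_pos) (half_pos one_pos) (add_halves 1)
    simp only [haffine, smul_eq_mul] at this
    linarith
  · rintro ⟨i, j, hi, hj, hw⟩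
    refine strictConvexOn_of_deriv2_pos' hs
      (fun θ _ => (hasDerivAt_weightedCgf w hp hp' θ).continuousAt.continuousWithinAt)
      fun θ _ => ?_
    rw [deriv2_weightedCgf w hp hp']
    refine div_pos ((sum_mul_sum_mul_sq_sub_sq_pos_iff w (tilted_nonneg w hp θ)).2
      ⟨i, j, (tilted_pos_iff w).2 hi, (tilted_pos_iff w).2 hj, hw⟩) ?_
    exact pow_pos (sum_tilted_pos w hp hp' θ) 2

end WeightedCgf

theorem ite_pos_mul_eq_mul {a b : ℝ} (ha : 0 ≤ a) : (if 0 < a then a * b else 0) = a * b := by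
  split_ifs with h
  · rfl
  · rw [le_antisymm (not_lt.1 h) ha, zero_mul]

theorem rpow_one_add_mul_rpow_neg {a b : ℝ} (ha : 0 < a) (hb : 0 < b) (θ : ℝ) :
    a ^ (1 + θ) * b ^ (-θ) = a * exp (θ * log (a / b)) := by
  rw [mul_comm θ, ← rpow_def_of_pos (div_pos ha hb), div_rpow ha.le hb.le, rpow_add ha, rpow_one,
    rpow_neg hb.le, div_eq_mul_inv, mul_assoc]

section ConditionalRenyi

variable {𝒳 𝒴 : Type*} [Fintype 𝒳]

noncomputable def logCondProb (P : 𝒳 × 𝒴 → ℝ) (q : 𝒳 × 𝒴) : ℝ :=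
  log (P q / margY P q.2)

theorem margY_pos {P : 𝒳 × 𝒴 → ℝ} (hP : 0 ≤ P) {x : 𝒳} {y : 𝒴} (hxy : 0 < P (x, y)) :
    0 < margY P y :=
  hxy.trans_le (single_le_sum (f := fun x => P (x, y)) (fun x _ => hP (x, y)) (mem_univ x))

variable [Fintype 𝒴] {P : 𝒳 × 𝒴 → ℝ}

theorem thetaCondRenyiDown_eq_neg_weightedCgf (hP : 0 ≤ P) (θ : ℝ) :
    thetaCondRenyiDown P θ = -weightedCgf P (logCondProb P) θ := by
  rw [thetaCondRenyiDown, weightedCgf, Fintype.sum_prod_type]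
  congr 2
  refine sum_congr rfl fun x _ => sum_congr rfl fun y _ => ?_
  split_ifs with h
  · rw [rpow_one_add_mul_rpow_neg h (margY_pos hP h), tilted, logCondProb]
  · simp [tilted, le_antisymm (not_lt.1 h) (hP (x, y))]

theorem condEnt_eq (hP : 0 ≤ P) : condEnt P = -∑ q, P q * logCondProb P q := by
  simp only [condEnt, ite_pos_mul_eq_mul (hP _), Fintype.sum_prod_type, logCondProb]

theorem condVarEnt_eq (hP : 0 ≤ P) :
    condVarEnt P = ∑ q, P q * logCondProb P q ^ 2 - (∑ q, P q * logCondProb P q) ^ 2 := by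
  simp only [condVarEnt, condEnt_eq hP, neg_sq, ite_pos_mul_eq_mul (hP _), Fintype.sum_prod_type,
    logCondProb]

end ConditionalRenyi

theorem thetaCondRenyiDown_concave_iff {𝒳 𝒴 : Type*} [Fintype 𝒳] [Fintype 𝒴]
    (P : 𝒳 × 𝒴 → ℝ) (hP0 : ∀ p, 0 ≤ P p) (hP1 : ∑ p : 𝒳 × 𝒴, P p = 1) :
    ConcaveOn ℝ (Set.Ioi (-1 : ℝ)) (fun θ => thetaCondRenyiDown P θ)
    ∧ (StrictConcaveOn ℝ (Set.Ioi (-1 : ℝ)) (fun θ => thetaCondRenyiDown P θ)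
        ↔ 0 < condVarEnt P) := by
  have hsupp : ∃ q, 0 < P q := by
    obtain ⟨q, -, hq⟩ := (sum_pos_iff_of_nonneg fun q _ => hP0 q).1 (hP1 ▸ one_pos)
    exact ⟨q, hq⟩
  have hg : (fun θ => thetaCondRenyiDown P θ) = -weightedCgf P (logCondProb P) :=
    funext (thetaCondRenyiDown_eq_neg_weightedCgf hP0)
  have hV : condVarEnt P = (∑ q, P q) * (∑ q, P q * logCondProb P q ^ 2)
      - (∑ q, P q * logCondProb P q) ^ 2 := by
    rw [condVarEnt_eq hP0, hP1, one_mul]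
  rw [hg, neg_strictConcaveOn_iff, hV, sum_mul_sum_mul_sq_sub_sq_pos_iff _ hP0]
  exact ⟨((convexOn_weightedCgf _ hP0 hsupp).subset (Set.subset_univ _) (convex_Ioi _)).neg,
    strictConvexOn_weightedCgf_iff _ (convex_Ioi _) (Set.Ioi_infinite _).nontrivial hP0 hsupp⟩
end

section
/- For every probability distribution P_XY on 𝒳×𝒴, lim_{θ→−1⁺} H↓_{1+θ}(X|Y) = log Σ_y P_Y(y)·N(y), where N(y) := |{x ∈ 𝒳 : P_XY(x,y) > 0}|. -/
open Real Filter

/-- Lower conditional Rényi entropy `H↓_{1+θ}(X|Y)`. -/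
noncomputable def condRenyiDown {𝒳 𝒴 : Type*} [Fintype 𝒳] [Fintype 𝒴]
    (P : 𝒳 × 𝒴 → ℝ) (θ : ℝ) : ℝ :=
  -(1 / θ) * Real.log (∑ x : 𝒳, ∑ y : 𝒴,
    if 0 < P (x, y) then P (x, y) ^ (1 + θ) * margY P y ^ (-θ) else 0)

/-- `N(y)`: the size of the support of `P_{X|Y}(·|y)`. -/
noncomputable def suppSize {𝒳 𝒴 : Type*} [Fintype 𝒳] (P : 𝒳 × 𝒴 → ℝ) (y : 𝒴) : ℕ :=
  (Finset.univ.filter fun x : 𝒳 => 0 < P (x, y)).card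

lemma margY_pos_s14 {𝒳 𝒴 : Type*} [Fintype 𝒳] (P : 𝒳 × 𝒴 → ℝ) (hP0 : ∀ p, 0 ≤ P p)
    {x : 𝒳} {y : 𝒴} (h : 0 < P (x, y)) : 0 < margY P y :=
  lt_of_lt_of_le h (Finset.single_le_sum (fun i _ => hP0 (i, y)) (Finset.mem_univ x))

lemma S_at_neg_one {𝒳 𝒴 : Type*} [Fintype 𝒳] [Fintype 𝒴] (P : 𝒳 × 𝒴 → ℝ) :
    (∑ x : 𝒳, ∑ y : 𝒴, if 0 < P (x, y) then
        P (x, y) ^ (1 + (-1 : ℝ)) * margY P y ^ (-(-1 : ℝ)) else 0)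
      = ∑ y : 𝒴, margY P y * (suppSize P y : ℝ) := by
  rw [Finset.sum_comm]
  refine Finset.sum_congr rfl fun y _ => ?_
  have : ∀ x : 𝒳, (if 0 < P (x, y) then
      P (x, y) ^ (1 + (-1 : ℝ)) * margY P y ^ (-(-1 : ℝ)) else 0)
      = if 0 < P (x, y) then margY P y else 0 := by
    intro x
    by_cases h : 0 < P (x, y)
    · simp [h, Real.rpow_one, Real.rpow_zero]
    · simp [h]
  simp only [this, Finset.sum_ite_eq, Finset.sum_const, ← Finset.sum_filter]
  simp [suppSize, mul_comm]

theorem condRenyiDown_tendsto_order_zero {𝒳 𝒴 : Type*} [Fintype 𝒳] [Fintype 𝒴]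
    (P : 𝒳 × 𝒴 → ℝ) (hP0 : ∀ p, 0 ≤ P p) (hP1 : ∑ p : 𝒳 × 𝒴, P p = 1) :
    Tendsto (fun θ : ℝ => condRenyiDown P θ) (nhdsWithin (-1 : ℝ) (Set.Ioi (-1 : ℝ)))
      (nhds (Real.log (∑ y : 𝒴, margY P y * (suppSize P y : ℝ)))) := by
  set S : ℝ → ℝ := fun θ => ∑ x : 𝒳, ∑ y : 𝒴,
    if 0 < P (x, y) then P (x, y) ^ (1 + θ) * margY P y ^ (-θ) else 0 with hS
  -- continuity of S
  have hScont : Continuous S := by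
    apply continuous_finset_sum
    intro x _
    apply continuous_finset_sum
    intro y _
    by_cases h : 0 < P (x, y)
    · simp only [if_pos h]
      have hm : 0 < margY P y := margY_pos_s14 P hP0 h
      simp only [Real.rpow_def_of_pos h, Real.rpow_def_of_pos hm]
      fun_prop
    · simp only [if_neg h]; exact continuous_const
  -- positivity of S (-1)
  have hval : S (-1) = ∑ y : 𝒴, margY P y * (suppSize P y : ℝ) := S_at_neg_one P
  have hpos : 0 < S (-1) := by
    rw [hval]
    obtain ⟨p, -, hp⟩ : ∃ p ∈ Finset.univ, 0 < P p := by
      by_contra hcon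
      push_neg at hcon
      have : ∑ p : 𝒳 × 𝒴, P p = 0 := by
        apply Finset.sum_eq_zero
        intro p hpmem
        exact le_antisymm (hcon p hpmem) (hP0 p)
      rw [this] at hP1; norm_num at hP1
    obtain ⟨x, y⟩ := p
    have hm : 0 < margY P y := margY_pos_s14 P hP0 hp
    have hN : 0 < (suppSize P y : ℝ) := by
      have : x ∈ Finset.univ.filter fun x : 𝒳 => 0 < P (x, y) := by
        simp [hp]
      have := Finset.card_pos.mpr ⟨x, this⟩
      exact_mod_cast this
    apply Finset.sum_pos' (fun y _ => mul_nonneg (by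
      exact Finset.sum_nonneg fun i _ => hP0 (i, y)) (Nat.cast_nonneg _))
    exact ⟨y, Finset.mem_univ y, mul_pos hm hN⟩
  -- continuity of condRenyiDown at -1
  have hcont : ContinuousAt (fun θ => condRenyiDown P θ) (-1) := by
    have : (fun θ => condRenyiDown P θ) = fun θ => -(1 / θ) * Real.log (S θ) := rfl
    rw [this]
    apply ContinuousAt.mul
    · exact (continuousAt_const.div continuousAt_id (by norm_num)).neg
    · exact (Real.continuousAt_log (ne_of_gt hpos)).comp hScont.continuousAt
  have hlim : Tendsto (fun θ => condRenyiDown P θ) (nhdsWithin (-1 : ℝ) (Set.Ioi (-1 : ℝ)))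
      (nhds (condRenyiDown P (-1))) := hcont.tendsto.mono_left nhdsWithin_le_nhds
  have heq : condRenyiDown P (-1) = Real.log (∑ y : 𝒴, margY P y * (suppSize P y : ℝ)) := by
    show -(1 / (-1 : ℝ)) * Real.log (S (-1)) = _
    rw [hval]; norm_num
  rwa [heq] at hlim
end
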